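/- arXiv:1602.04530 — 4 statements merged into one kernel-verified Lean document; each statement's English description precedes it below -/
import Mathlib

section
/- If q extends p (i.e. p ⊆ q as graphs of finite partial functions from ℕ to Bool) and p ◁ S is a partition of p, then any two distinct elements of S are incompatible (their union is not a function). -/
/-- A condition: (the graph of) a finite partial function `ℕ ⇀ Bool`,
represented as a finite set of pairs. -/
abbrev Cond : Type := Finset (ℕ × Bool)

/-- `p` is (the graph of) a partial function. -/
def IsFunc (p : Cond) : Prop := ∀ x ∈ p, ∀ y ∈ p, x.1 = y.1 → x.2 = y.2

instance (p : Cond) : Decidable (IsFunc p) := by unfold IsFunc; exact inferInstance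

/-- The domain of a condition. -/
def condDom (p : Cond) : Finset ℕ := p.image Prod.fst

/-- `condExt p n b` is `p(n ↦ b) = p ∪ {(n, b)}`. -/
def condExt (p : Cond) (n : ℕ) (b : Bool) : Cond := insert (n, b) p

/-- The partition relation `p ◁ S`. -/
inductive Partn : Cond → Finset Cond → Prop
  | refl (p : Cond) : Partn p {p}
  | split (p : Cond) (n : ℕ) (S₀ S₁ : Finset Cond) :
      n ∉ condDom p → Partn (condExt p n false) S₀ → Partn (condExt p n true) S₁ →
      Partn p (S₀ ∪ S₁)


lemma partn_subset {p : Cond} {S : Finset Cond} (h : Partn p S) :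
    ∀ r ∈ S, p ⊆ r := by
  induction h with
  | refl p => intro r hr; simp at hr; subst hr; exact Finset.Subset.refl _
  | split p n S₀ S₁ hn h0 h1 ih0 ih1 =>
    intro r hr
    rcases Finset.mem_union.mp hr with hr | hr
    · exact fun x hx => ih0 r hr (Finset.mem_insert_of_mem hx)
    · exact fun x hx => ih1 r hr (Finset.mem_insert_of_mem hx)

lemma partn_incompat {p : Cond} {S : Finset Cond} (h : Partn p S) :
    ∀ r ∈ S, ∀ s ∈ S, r ≠ s → ¬ IsFunc (r ∪ s) := by
  induction h with
  | refl p =>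
    intro r hr s hs hne
    simp at hr hs; subst hr; subst hs; exact absurd rfl hne
  | split p n S₀ S₁ hn h0 h1 ih0 ih1 =>
    intro r hr s hs hne hf
    have key : ∀ a b : Cond, a ∈ S₀ → b ∈ S₁ → ¬ IsFunc (a ∪ b) := by
      intro a b ha hb hfab
      have hfa : (n, false) ∈ a := partn_subset h0 a ha (Finset.mem_insert_self _ _)
      have hfb : (n, true) ∈ b := partn_subset h1 b hb (Finset.mem_insert_self _ _)
      have := hfab (n, false) (Finset.mem_union_left _ hfa)
        (n, true) (Finset.mem_union_right _ hfb) rfl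
      simp at this
    rcases Finset.mem_union.mp hr with hr | hr <;>
      rcases Finset.mem_union.mp hs with hs | hs
    · exact ih0 r hr s hs hne hf
    · exact key r s hr hs hf
    · exact key s r hs hr (by rwa [Finset.union_comm s r])
    · exact ih1 r hr s hs hne hf

/-- If `q` extends `p` and `p ◁ S`, then any two distinct elements of `S` are
incompatible: their union is not (the graph of) a function. -/
theorem stmt0 (p q : Cond) (S : Finset Cond) (hp : IsFunc p) (hq : p ⊆ q)
    (hS : Partn p S) :
    ∀ r ∈ S, ∀ s ∈ S, r ≠ s → ¬ IsFunc (r ∪ s) := by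
  exact partn_incompat hS
end

section
/- Any partition of a condition p contains a condition r such that r(k) = 1 (true) for every k ∈ dom(r) \ dom(p). -/
lemma stmt6_aux (p : Cond) (S : Finset Cond) (hS : Partn p S) :
    IsFunc p → ∃ r ∈ S, p ⊆ r ∧ IsFunc r ∧ ∀ x ∈ r, x.1 ∉ condDom p → x.2 = true := by
  induction hS with
  | refl p =>
    intro hp
    refine ⟨p, Finset.mem_singleton_self p, subset_rfl, hp, fun x hx hxd => ?_⟩
    exact absurd (Finset.mem_image_of_mem Prod.fst hx) hxd
  | split p n S₀ S₁ hn h0 h1 ih0 ih1 =>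
    intro hp
    have hfunc : IsFunc (condExt p n true) := by
      intro x hx y hy hxy
      rcases Finset.mem_insert.mp hx with hx | hx <;>
        rcases Finset.mem_insert.mp hy with hy | hy
      · rw [hx, hy]
      · exfalso; subst hx; simp only [] at hxy
        exact hn (hxy ▸ Finset.mem_image_of_mem Prod.fst hy)
      · exfalso; subst hy; simp only [] at hxy
        exact hn (hxy ▸ Finset.mem_image_of_mem Prod.fst hx)
      · exact hp x hx y hy hxy
    obtain ⟨r, hr, hsub, hrf, hprop⟩ := ih1 hfunc
    have hpsub : p ⊆ r := fun x hx => hsub (Finset.mem_insert_of_mem hx)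
    refine ⟨r, Finset.mem_union_right _ hr, hpsub, hrf, fun x hx hxd => ?_⟩
    by_cases hxn : x.1 = n
    · have hnt : (n, true) ∈ r := hsub (Finset.mem_insert_self _ _)
      exact hrf x hx (n, true) hnt hxn
    · refine hprop x hx ?_
      simp only [condDom, condExt, Finset.image_insert, Finset.mem_insert]
      push_neg
      exact ⟨hxn, fun h => hxd h⟩

/-- Any partition of `p` contains a condition `r` with `r k = true` for every
`k ∈ dom r \ dom p`. -/
theorem stmt6 (p : Cond) (S : Finset Cond) (hp : IsFunc p) (hS : Partn p S) :
    ∃ r ∈ S, ∀ x ∈ r, x.1 ∉ condDom p → x.2 = true := by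
  obtain ⟨r, hr, _, _, h⟩ := stmt6_aux p S hS hp
  exact ⟨r, hr, h⟩
end

section
/- For an abstract condition-indexed reduction relation on terms, locality of one-step reduction holds: if m ∉ dom(p) and t →_{p(m↦0)} u and t →_{p(m↦1)} u, then t →_p u. (Here the reduction t →_p u is generated by a condition-independent base relation t → u, the rule f(k̄) →_p p(k) for k ∈ dom(p) where f is a fixed generic function symbol, and closure under evaluation contexts.) -/
/-- Terms of the untyped calculus, with a generic function symbol `gen` (the
symbol `f`), booleans, numerals built from `zero`/`suc`, pairs, λ, and the
recursors. -/
inductive Tm : Type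
  | var : ℕ → Tm
  | lam : Tm → Tm
  | app : Tm → Tm → Tm
  | pair : Tm → Tm → Tm
  | fst : Tm → Tm
  | snd : Tm → Tm
  | zero : Tm
  | one : Tm
  | suc : Tm → Tm
  | gen : Tm
  | rec0 : Tm → Tm
  | rec1 : Tm → Tm → Tm
  | rec2 : Tm → Tm → Tm → Tm
  | recN : Tm → Tm → Tm → Tm
  deriving DecidableEq

/-- The numeral `n̄ = Sⁿ 0`. -/
def numeral : ℕ → Tm
  | 0 => .zero
  | n + 1 => .suc (numeral n)

/-- Booleans as terms. -/
def ofBool : Bool → Tm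
  | false => .zero
  | true => .one

/-- de Bruijn lifting of variables `≥ d`. -/
def lift (d : ℕ) : Tm → Tm
  | .var i => if i < d then .var i else .var (i + 1)
  | .lam t => .lam (lift (d + 1) t)
  | .app t u => .app (lift d t) (lift d u)
  | .pair t u => .pair (lift d t) (lift d u)
  | .fst t => .fst (lift d t)
  | .snd t => .snd (lift d t)
  | .zero => .zero
  | .one => .one
  | .suc t => .suc (lift d t)
  | .gen => .gen
  | .rec0 C => .rec0 (lift (d + 1) C)
  | .rec1 C a => .rec1 (lift (d + 1) C) (lift d a)
  | .rec2 C a b => .rec2 (lift (d + 1) C) (lift d a) (lift d b)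
  | .recN C a g => .recN (lift (d + 1) C) (lift d a) (lift d g)

/-- Capture-avoiding substitution `t[a/k]` (de Bruijn). -/
def subst : Tm → ℕ → Tm → Tm
  | .var i, k, a => if i < k then .var i else if i = k then a else .var (i - 1)
  | .lam t, k, a => .lam (subst t (k + 1) (lift 0 a))
  | .app t u, k, a => .app (subst t k a) (subst u k a)
  | .pair t u, k, a => .pair (subst t k a) (subst u k a)
  | .fst t, k, a => .fst (subst t k a)
  | .snd t, k, a => .snd (subst t k a)
  | .zero, _, _ => .zero
  | .one, _, _ => .one
  | .suc t, k, a => .suc (subst t k a)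
  | .gen, _, _ => .gen
  | .rec0 C, k, a => .rec0 (subst C (k + 1) (lift 0 a))
  | .rec1 C c, k, a => .rec1 (subst C (k + 1) (lift 0 a)) (subst c k a)
  | .rec2 C c0 c1, k, a => .rec2 (subst C (k + 1) (lift 0 a)) (subst c0 k a) (subst c1 k a)
  | .recN C cz g, k, a => .recN (subst C (k + 1) (lift 0 a)) (subst cz k a) (subst g k a)

/-- The condition-free base reduction (β/ι). -/
inductive Step : Tm → Tm → Prop
  | beta (t a : Tm) : Step (.app (.lam t) a) (subst t 0 a)
  | fstPair (u v : Tm) : Step (.fst (.pair u v)) u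
  | sndPair (u v : Tm) : Step (.snd (.pair u v)) v
  | rec1Zero (C c : Tm) : Step (.app (.rec1 C c) .zero) c
  | rec2Zero (C c0 c1 : Tm) : Step (.app (.rec2 C c0 c1) .zero) c0
  | rec2One (C c0 c1 : Tm) : Step (.app (.rec2 C c0 c1) .one) c1
  | recNZero (C cz g : Tm) : Step (.app (.recN C cz g) .zero) cz
  | recNSuc (C cz g : Tm) (k : ℕ) :
      Step (.app (.recN C cz g) (.suc (numeral k)))
        (.app (.app g (numeral k)) (.app (.recN C cz g) (numeral k)))

/-- Evaluation contexts `E ::= [] | E u | E.1 | E.2 | S E | f E | rec … E`. -/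
inductive Ctx : Type
  | hole : Ctx
  | appL : Ctx → Tm → Ctx
  | fst : Ctx → Ctx
  | snd : Ctx → Ctx
  | suc : Ctx → Ctx
  | genApp : Ctx → Ctx
  | rec0Arg : Tm → Ctx → Ctx
  | rec1Arg : Tm → Tm → Ctx → Ctx
  | rec2Arg : Tm → Tm → Tm → Ctx → Ctx
  | recNArg : Tm → Tm → Tm → Ctx → Ctx

/-- Plugging a term into the hole of an evaluation context. -/
def Ctx.fill : Ctx → Tm → Tm
  | .hole, e => e
  | .appL E u, e => .app (E.fill e) u
  | .fst E, e => .fst (E.fill e)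
  | .snd E, e => .snd (E.fill e)
  | .suc E, e => .suc (E.fill e)
  | .genApp E, e => .app .gen (E.fill e)
  | .rec0Arg C E, e => .app (.rec0 C) (E.fill e)
  | .rec1Arg C a E, e => .app (.rec1 C a) (E.fill e)
  | .rec2Arg C a b E, e => .app (.rec2 C a b) (E.fill e)
  | .recNArg C cz g E, e => .app (.recN C cz g) (E.fill e)

/-- The condition-indexed one-step reduction `t →_p u`: generated by the base
reduction, the rule `f k̄ →_p p(k)` for `k ∈ dom p`, and closure under
evaluation contexts. -/
inductive Red (p : Cond) : Tm → Tm → Prop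
  | base {t u : Tm} : Step t u → Red p t u
  | genRed {k : ℕ} {b : Bool} : (k, b) ∈ p → Red p (.app .gen (numeral k)) (ofBool b)
  | ctx {e e' : Tm} (E : Ctx) : Red p e e' → Red p (E.fill e) (E.fill e')

/-- Multi-step reduction `t →*_p u`. -/
def Reds (p : Cond) : Tm → Tm → Prop := Relation.ReflTransGen (Red p)

/-- Whether a term contains the symbol `gen`. -/
def containsGen : Tm → Bool
  | .var _ => false
  | .lam t => containsGen t
  | .app t u => containsGen t || containsGen u
  | .pair t u => containsGen t || containsGen u
  | .fst t => containsGen t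
  | .snd t => containsGen t
  | .zero => false
  | .one => false
  | .suc t => containsGen t
  | .gen => true
  | .rec0 C => containsGen C
  | .rec1 C a => containsGen C || containsGen a
  | .rec2 C a b => containsGen C || containsGen a || containsGen b
  | .recN C a g => containsGen C || containsGen a || containsGen g

lemma containsGen_numeral (n : ℕ) : containsGen (numeral n) = false := by
  induction n with
  | zero => rfl
  | succ n ih => simpa [numeral, containsGen] using ih

lemma containsGen_fill (E : Ctx) (t : Tm) (h : containsGen t = true) :
    containsGen (E.fill t) = true := by
  induction E <;> simp_all [Ctx.fill, containsGen]

lemma fill_ne_gen (E : Ctx) (a b : Tm) : E.fill (.app a b) ≠ .gen := by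
  cases E <;> simp [Ctx.fill]

lemma fill_ne_rec0 (E : Ctx) (a b C : Tm) : E.fill (.app a b) ≠ .rec0 C := by
  cases E <;> simp [Ctx.fill]

lemma fill_ne_rec1 (E : Ctx) (a b C c : Tm) : E.fill (.app a b) ≠ .rec1 C c := by
  cases E <;> simp [Ctx.fill]

lemma fill_ne_rec2 (E : Ctx) (a b C c0 c1 : Tm) : E.fill (.app a b) ≠ .rec2 C c0 c1 := by
  cases E <;> simp [Ctx.fill]

lemma fill_ne_recN (E : Ctx) (a b C cz g : Tm) : E.fill (.app a b) ≠ .recN C cz g := by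
  cases E <;> simp [Ctx.fill]

lemma fill_ne_numeral (E : Ctx) (s : Tm) (n : ℕ) :
    E.fill (.app .gen s) ≠ numeral n := by
  intro h
  have h1 : containsGen (E.fill (.app .gen s)) = true :=
    containsGen_fill _ _ (by simp [containsGen])
  rw [h, containsGen_numeral] at h1
  exact Bool.false_ne_true h1

/-- Unique decomposition for the redex `f n̄`. -/
lemma fill_unique (m : ℕ) : ∀ E₀ E₁ : Ctx,
    E₀.fill (.app .gen (numeral m)) = E₁.fill (.app .gen (numeral m)) → E₀ = E₁ := by
  intro E₀
  induction E₀ with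
  | hole =>
    intro E₁ h
    cases E₁ <;> simp only [Ctx.fill] at h ⊢
    case appL E u =>
      injection h with h1 h2
      exact absurd h1.symm (fill_ne_gen _ _ _)
    case genApp E =>
      injection h with h1 h2
      exact absurd h2.symm (fill_ne_numeral _ _ _)
    all_goals first
      | (injection h with h1 h2; cases h1)
      | cases h
  | appL E u ih =>
    intro E₁ h
    cases E₁ <;> simp only [Ctx.fill] at h ⊢
    case hole =>
      injection h with h1 h2
      exact absurd h1 (fill_ne_gen _ _ _)
    case appL E' u' =>
      injection h with h1 h2
      rw [ih _ h1, h2]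
    case genApp E' =>
      injection h with h1 h2
      exact absurd h1 (fill_ne_gen _ _ _)
    case rec0Arg C E' =>
      injection h with h1 h2
      exact absurd h1 (fill_ne_rec0 _ _ _ _)
    case rec1Arg C a E' =>
      injection h with h1 h2
      exact absurd h1 (fill_ne_rec1 _ _ _ _ _)
    case rec2Arg C a b E' =>
      injection h with h1 h2
      exact absurd h1 (fill_ne_rec2 _ _ _ _ _ _)
    case recNArg C cz g E' =>
      injection h with h1 h2
      exact absurd h1 (fill_ne_recN _ _ _ _ _ _)
    all_goals cases h
  | fst E ih =>
    intro E₁ h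
    cases E₁ <;> simp only [Ctx.fill] at h ⊢
    case fst E' => injection h with h1; rw [ih _ h1]
    all_goals cases h
  | snd E ih =>
    intro E₁ h
    cases E₁ <;> simp only [Ctx.fill] at h ⊢
    case snd E' => injection h with h1; rw [ih _ h1]
    all_goals cases h
  | suc E ih =>
    intro E₁ h
    cases E₁ <;> simp only [Ctx.fill] at h ⊢
    case suc E' => injection h with h1; rw [ih _ h1]
    all_goals cases h
  | genApp E ih =>
    intro E₁ h
    cases E₁ <;> simp only [Ctx.fill] at h ⊢
    case hole =>
      injection h with h1 h2
      exact absurd h2 (fill_ne_numeral _ _ _)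
    case appL E' u' =>
      injection h with h1 h2
      exact absurd h1.symm (fill_ne_gen _ _ _)
    case genApp E' =>
      injection h with h1 h2
      rw [ih _ h2]
    case rec0Arg C E' => injection h with h1; cases h1
    case rec1Arg C a E' => injection h with h1; cases h1
    case rec2Arg C a b E' => injection h with h1; cases h1
    case recNArg C cz g E' => injection h with h1; cases h1
    all_goals cases h
  | rec0Arg C E ih =>
    intro E₁ h
    cases E₁ <;> simp only [Ctx.fill] at h ⊢
    case hole => injection h with h1; cases h1
    case appL E' u' =>
      injection h with h1 h2
      exact absurd h1.symm (fill_ne_rec0 _ _ _ _)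
    case genApp E' => injection h with h1; cases h1
    case rec0Arg C' E' =>
      injection h with h1 h2
      injection h1 with h1
      rw [h1, ih _ h2]
    case rec1Arg C' a E' => injection h with h1; cases h1
    case rec2Arg C' a b E' => injection h with h1; cases h1
    case recNArg C' cz g E' => injection h with h1; cases h1
    all_goals cases h
  | rec1Arg C a E ih =>
    intro E₁ h
    cases E₁ <;> simp only [Ctx.fill] at h ⊢
    case hole => injection h with h1; cases h1
    case appL E' u' =>
      injection h with h1 h2
      exact absurd h1.symm (fill_ne_rec1 _ _ _ _ _)
    case genApp E' => injection h with h1; cases h1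
    case rec0Arg C' E' => injection h with h1; cases h1
    case rec1Arg C' a' E' =>
      injection h with h1 h2
      injection h1 with h1 h1'
      rw [h1, h1', ih _ h2]
    case rec2Arg C' a' b' E' => injection h with h1; cases h1
    case recNArg C' cz g E' => injection h with h1; cases h1
    all_goals cases h
  | rec2Arg C a b E ih =>
    intro E₁ h
    cases E₁ <;> simp only [Ctx.fill] at h ⊢
    case hole => injection h with h1; cases h1
    case appL E' u' =>
      injection h with h1 h2
      exact absurd h1.symm (fill_ne_rec2 _ _ _ _ _ _)
    case genApp E' => injection h with h1; cases h1
    case rec0Arg C' E' => injection h with h1; cases h1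
    case rec1Arg C' a' E' => injection h with h1; cases h1
    case rec2Arg C' a' b' E' =>
      injection h with h1 h2
      injection h1 with h1 h1' h1''
      rw [h1, h1', h1'', ih _ h2]
    case recNArg C' cz g E' => injection h with h1; cases h1
    all_goals cases h
  | recNArg C cz g E ih =>
    intro E₁ h
    cases E₁ <;> simp only [Ctx.fill] at h ⊢
    case hole => injection h with h1; cases h1
    case appL E' u' =>
      injection h with h1 h2
      exact absurd h1.symm (fill_ne_recN _ _ _ _ _ _)
    case genApp E' => injection h with h1; cases h1
    case rec0Arg C' E' => injection h with h1; cases h1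
    case rec1Arg C' a' E' => injection h with h1; cases h1
    case rec2Arg C' a' b' E' => injection h with h1; cases h1
    case recNArg C' cz' g' E' =>
      injection h with h1 h2
      injection h1 with h1 h1' h1''
      rw [h1, h1', h1'', ih _ h2]
    all_goals cases h

lemma fill_inj (E : Ctx) : ∀ a b : Tm, E.fill a = E.fill b → a = b := by
  induction E with
  | hole => intro a b h; exact h
  | appL E u ih => intro a b h; injection h with h1 _; exact ih _ _ h1
  | fst E ih => intro a b h; injection h with h1; exact ih _ _ h1
  | snd E ih => intro a b h; injection h with h1; exact ih _ _ h1
  | suc E ih => intro a b h; injection h with h1; exact ih _ _ h1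
  | genApp E ih => intro a b h; injection h with _ h2; exact ih _ _ h2
  | rec0Arg C E ih => intro a b h; injection h with _ h2; exact ih _ _ h2
  | rec1Arg C c E ih => intro a b h; injection h with _ h2; exact ih _ _ h2
  | rec2Arg C c0 c1 E ih => intro a b h; injection h with _ h2; exact ih _ _ h2
  | recNArg C cz g E ih => intro a b h; injection h with _ h2; exact ih _ _ h2

/-- Composition of evaluation contexts. -/
def Ctx.comp : Ctx → Ctx → Ctx
  | .hole, F => F
  | .appL E u, F => .appL (E.comp F) u
  | .fst E, F => .fst (E.comp F)
  | .snd E, F => .snd (E.comp F)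
  | .suc E, F => .suc (E.comp F)
  | .genApp E, F => .genApp (E.comp F)
  | .rec0Arg C E, F => .rec0Arg C (E.comp F)
  | .rec1Arg C a E, F => .rec1Arg C a (E.comp F)
  | .rec2Arg C a b E, F => .rec2Arg C a b (E.comp F)
  | .recNArg C cz g E, F => .recNArg C cz g (E.comp F)

lemma fill_comp (E F : Ctx) (t : Tm) : (E.comp F).fill t = E.fill (F.fill t) := by
  induction E <;> simp_all [Ctx.comp, Ctx.fill]

/-- Decomposition: a reduction under `p(m↦b)` is either a reduction under `p`
or the reduction of a redex `f m̄` in some evaluation context. -/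
lemma red_ext_decomp (p : Cond) (m : ℕ) (b : Bool) {t u : Tm}
    (h : Red (condExt p m b) t u) :
    Red p t u ∨ ∃ E : Ctx, t = E.fill (.app .gen (numeral m)) ∧ u = E.fill (ofBool b) := by
  induction h with
  | base hs => exact Or.inl (Red.base hs)
  | @genRed k b' hk =>
    rcases Finset.mem_insert.mp hk with h | h
    · obtain ⟨h1, h2⟩ := Prod.mk.injEq .. ▸ h
      subst h1; subst h2
      exact Or.inr ⟨Ctx.hole, rfl, rfl⟩
    · exact Or.inl (Red.genRed h)
  | @ctx e e' E _ ih =>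
    rcases ih with h | ⟨F, he, he'⟩
    · exact Or.inl (Red.ctx E h)
    · exact Or.inr ⟨E.comp F, by rw [fill_comp, he], by rw [fill_comp, he']⟩

/-- Locality of one-step reduction: if `m ∉ dom p`, `t →_{p(m↦0)} u` and
`t →_{p(m↦1)} u`, then `t →_p u`. -/
theorem stmt9 (p : Cond) (hp : IsFunc p) (m : ℕ) (hm : m ∉ condDom p) (t u : Tm)
    (h0 : Red (condExt p m false) t u) (h1 : Red (condExt p m true) t u) :
    Red p t u := by
  rcases red_ext_decomp p m false h0 with h | ⟨E₀, ht₀, hu₀⟩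
  · exact h
  rcases red_ext_decomp p m true h1 with h | ⟨E₁, ht₁, hu₁⟩
  · exact h
  have hE : E₀ = E₁ := fill_unique m E₀ E₁ (ht₀ ▸ ht₁)
  subst hE
  have : (ofBool false : Tm) = ofBool true := fill_inj E₀ _ _ (hu₀ ▸ hu₁)
  simp [ofBool] at this
end

section
/- Multi-step reduction is NOT local in general: there exist conditions p, terms t, u and m ∉ dom(p) such that t →*_{p(m↦0)} u and t →*_{p(m↦1)} u but not t →*_p u. Concretely, with t = rec_Bool (λx.ℕ) n̄ n̄ (f m̄) and u = n̄, both branches reduce t to n̄ in two steps, but t admits no reduction at the empty condition. -/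
/-- The "dead" terms relevant to the counterexample: none of them admits a
reduction at the empty condition. -/
def Dead (t : Tm) : Prop :=
  t = .app (.rec2 .zero .zero .zero) (.app .gen .zero) ∨
  t = .rec2 .zero .zero .zero ∨
  t = .app .gen .zero ∨
  t = .gen ∨
  t = .zero

lemma dead_fill : ∀ (E : Ctx) (e : Tm), Dead (E.fill e) → Dead e := by
  intro E
  induction E with
  | hole => intro e h; exact h
  | appL E u ih =>
      intro e h
      simp only [Ctx.fill] at h
      rcases h with h | h | h | h | h
      · injection h with h1 h2
        exact ih e (Or.inr (Or.inl h1))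
      · exact absurd h (by simp)
      · injection h with h1 h2
        exact ih e (Or.inr (Or.inr (Or.inr (Or.inl h1))))
      · exact absurd h (by simp)
      · exact absurd h (by simp)
  | fst E ih => intro e h; rcases h with h | h | h | h | h <;> simp [Ctx.fill] at h
  | snd E ih => intro e h; rcases h with h | h | h | h | h <;> simp [Ctx.fill] at h
  | suc E ih => intro e h; rcases h with h | h | h | h | h <;> simp [Ctx.fill] at h
  | genApp E ih =>
      intro e h
      simp only [Ctx.fill] at h
      rcases h with h | h | h | h | h
      · exact absurd h (by simp)
      · exact absurd h (by simp)
      · injection h with h1 h2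
        exact ih e (Or.inr (Or.inr (Or.inr (Or.inr h2))))
      · exact absurd h (by simp)
      · exact absurd h (by simp)
  | rec0Arg C E ih =>
      intro e h; rcases h with h | h | h | h | h <;> simp [Ctx.fill] at h
  | rec1Arg C a E ih =>
      intro e h; rcases h with h | h | h | h | h <;> simp [Ctx.fill] at h
  | rec2Arg C a b E ih =>
      intro e h
      simp only [Ctx.fill] at h
      rcases h with h | h | h | h | h
      · injection h with h1 h2
        exact ih e (Or.inr (Or.inr (Or.inl h2)))
      · exact absurd h (by simp)
      · exact absurd h (by simp)
      · exact absurd h (by simp)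
      · exact absurd h (by simp)
  | recNArg C cz g E ih =>
      intro e h; rcases h with h | h | h | h | h <;> simp [Ctx.fill] at h

lemma dead_no_step {a b : Tm} (hd : Dead a) (hs : Step a b) : False := by
  rcases hd with h | h | h | h | h <;> subst h <;> cases hs

lemma dead_no_red {a b : Tm} (h : Red ∅ a b) (hd : Dead a) : False := by
  induction h with
  | base hs => exact dead_no_step hd hs
  | genRed hk => exact absurd hk (Finset.notMem_empty _)
  | ctx E hr ih => exact ih (dead_fill E _ hd)

/-- Multi-step reduction is NOT local: there are `p`, `m ∉ dom p` and terms
`t = rec_Bool C n̄ n̄ (f m̄)`, `u = n̄` with `t →*_{p(m↦0)} u` and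
`t →*_{p(m↦1)} u` but not `t →*_p u`. -/
theorem stmt15 :
    ∃ (p : Cond) (m n : ℕ) (C : Tm), IsFunc p ∧ m ∉ condDom p ∧
      Reds (condExt p m false)
        (.app (.rec2 C (numeral n) (numeral n)) (.app .gen (numeral m))) (numeral n) ∧
      Reds (condExt p m true)
        (.app (.rec2 C (numeral n) (numeral n)) (.app .gen (numeral m))) (numeral n) ∧
      ¬ Reds p
        (.app (.rec2 C (numeral n) (numeral n)) (.app .gen (numeral m))) (numeral n) := by
  refine ⟨∅, 0, 0, .zero, ?_, ?_, ?_, ?_, ?_⟩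
  · intro x hx; exact absurd hx (Finset.notMem_empty _)
  · simp [condDom]
  · refine Relation.ReflTransGen.head
      (Red.ctx (Ctx.rec2Arg .zero (numeral 0) (numeral 0) Ctx.hole)
        (Red.genRed (k := 0) (b := false) (Finset.mem_insert_self _ _)))
      (Relation.ReflTransGen.single (Red.base (Step.rec2Zero _ _ _)))
  · refine Relation.ReflTransGen.head
      (Red.ctx (Ctx.rec2Arg .zero (numeral 0) (numeral 0) Ctx.hole)
        (Red.genRed (k := 0) (b := true) (Finset.mem_insert_self _ _)))
      (Relation.ReflTransGen.single (Red.base (Step.rec2One _ _ _)))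
  · intro h
    rcases Relation.ReflTransGen.cases_head h with h | ⟨c, hc, _⟩
    · simp [numeral] at h
    · exact dead_no_red hc (Or.inl rfl)
end
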